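/- A bornological coarse space X admits an ample X-controlled Hilbert space if and only if X is locally countable, i.e. there exists an entourage V of X such that every V-separated subset of X is locally countable. -/

import Mathlib

/-- The `U`-thickening `U[B] := {x : ∃ b ∈ B, (x, b) ∈ U}` of a subset `B` by an
entourage `U`. -/
def thick {X : Type*} (U : Set (X × X)) (B : Set X) : Set X :=
  {x | ∃ b ∈ B, (x, b) ∈ U}

/-- Composition of relations: `U ∘ V`. -/
def relComp {X : Type*} (U V : Set (X × X)) : Set (X × X) :=
  {p | ∃ z, (p.1, z) ∈ U ∧ (z, p.2) ∈ V}

/-- `iterComp U n` is the `(n+1)`-fold composition `U ∘ U ∘ ⋯ ∘ U`. -/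
def iterComp {X : Type*} (U : Set (X × X)) : ℕ → Set (X × X)
  | 0 => U
  | n + 1 => relComp (iterComp U n) U

/-- A bornological coarse structure on a set `X`: a coarse structure (a collection of
entourages containing the diagonal and closed under subsets, finite unions, inverses and
compositions) together with a compatible bornology (a collection of bounded sets covering
`X` and closed under subsets and finite unions, such that controlled thickenings of bounded
sets are bounded). -/
structure BornCoarse (X : Type*) where
  /-- the entourages -/
  entourages : Set (Set (X × X))
  diag_mem : {p : X × X | p.1 = p.2} ∈ entourages
  subset_mem : ∀ ⦃U V : Set (X × X)⦄, U ∈ entourages → V ⊆ U → V ∈ entourages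
  union_mem : ∀ ⦃U V : Set (X × X)⦄, U ∈ entourages → V ∈ entourages → U ∪ V ∈ entourages
  inv_mem : ∀ ⦃U : Set (X × X)⦄, U ∈ entourages → {p : X × X | (p.2, p.1) ∈ U} ∈ entourages
  comp_mem : ∀ ⦃U V : Set (X × X)⦄, U ∈ entourages → V ∈ entourages →
    relComp U V ∈ entourages
  /-- the bounded subsets -/
  bounded : Set (Set X)
  covers : ∀ x : X, ∃ B ∈ bounded, x ∈ B
  empty_mem : (∅ : Set X) ∈ bounded
  bounded_subset : ∀ ⦃B C : Set X⦄, B ∈ bounded → C ⊆ B → C ∈ bounded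
  bounded_union : ∀ ⦃B C : Set X⦄, B ∈ bounded → C ∈ bounded → B ∪ C ∈ bounded
  compat : ∀ ⦃U : Set (X × X)⦄ ⦃B : Set X⦄, U ∈ entourages → B ∈ bounded →
    thick U B ∈ bounded

/-- A map between bornological coarse spaces is controlled if it maps entourages to
entourages. -/
def IsControlled {X X' : Type*} (S : BornCoarse X) (S' : BornCoarse X') (f : X → X') :
    Prop :=
  ∀ U ∈ S.entourages, (fun p : X × X => (f p.1, f p.2)) '' U ∈ S'.entourages

/-- A map between bornological coarse spaces is proper if preimages of bounded sets are
bounded. -/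
def IsProper {X X' : Type*} (S : BornCoarse X) (S' : BornCoarse X') (f : X → X') : Prop :=
  ∀ B ∈ S'.bounded, f ⁻¹' B ∈ S.bounded

/-- A morphism of bornological coarse spaces is a controlled and proper map. -/
def IsMorphism {X X' : Type*} (S : BornCoarse X) (S' : BornCoarse X') (f : X → X') : Prop :=
  IsControlled S S' f ∧ IsProper S S' f

noncomputable section

/-- The characteristic function of `B ⊆ X` as a bounded (continuous) function on the
discrete space `X`. -/
def chi {X : Type*} [TopologicalSpace X] [DiscreteTopology X] (B : Set X) :
    BoundedContinuousFunction X ℂ :=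
  BoundedContinuousFunction.ofNormedAddCommGroup (B.indicator fun _ => (1 : ℂ))
    continuous_of_discreteTopology 1 fun x => by
      by_cases hx : x ∈ B <;> simp [Set.indicator_apply, hx]

/-- A unital `*`-homomorphism from the `C*`-algebra `C(X)` of bounded functions on the
discrete space `X` into the bounded operators on the Hilbert space `H`. -/
abbrev CtrlRep (X : Type*) [TopologicalSpace X] [DiscreteTopology X] (H : Type*)
    [NormedAddCommGroup H] [InnerProductSpace ℂ H] [CompleteSpace H] :=
  BoundedContinuousFunction X ℂ →⋆ₐ[ℂ] (H →L[ℂ] H)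

section

variable {X : Type*} [TopologicalSpace X] [DiscreteTopology X]
variable {H : Type*} [NormedAddCommGroup H] [InnerProductSpace ℂ H] [CompleteSpace H]
variable {H' : Type*} [NormedAddCommGroup H'] [InnerProductSpace ℂ H'] [CompleteSpace H']

/-- `H(B) = φ(χ_B)H`, the subspace of vectors supported on `B`. -/
def Hsub (φ : CtrlRep X H) (B : Set X) : Set H :=
  Set.range ⇑(φ (chi B))

/-- `(H, φ)` is an `X`-controlled Hilbert space: `H(B)` is separable for every bounded
subset `B`. -/
def IsControlledHilbert (S : BornCoarse X) (φ : CtrlRep X H) : Prop :=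
  ∀ B ∈ S.bounded, TopologicalSpace.IsSeparable (Hsub φ B)

/-- A bounded operator has controlled propagation if there is an entourage `U` with
`A(H(B)) ⊆ H'(U[B])` for every bounded `B`. -/
def HasCtrlProp (S : BornCoarse X) (φ : CtrlRep X H) (φ' : CtrlRep X H')
    (A : H →L[ℂ] H') : Prop :=
  ∃ U ∈ S.entourages, ∀ B ∈ S.bounded, ⇑A '' Hsub φ B ⊆ Hsub φ' (thick U B)

/-- A bounded operator is quasi-local if there is an entourage `U` such that for every
`ε > 0` there is `n` with `‖φ'(χ_{B'}) A φ(χ_B)‖ ≤ ε` for all `Uⁿ`-separated `B, B'`. -/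
def IsQuasiLocal (S : BornCoarse X) (φ : CtrlRep X H) (φ' : CtrlRep X H')
    (A : H →L[ℂ] H') : Prop :=
  ∃ U ∈ S.entourages, ∀ ε : ℝ, 0 < ε → ∃ n : ℕ, ∀ B B' : Set X,
    thick (iterComp U n) B ∩ thick (iterComp U n) B' = ∅ →
      ‖φ' (chi B') ∘L A ∘L φ (chi B)‖ ≤ ε

/-- A bounded operator is locally compact if `φ(χ_B)A` and `Aφ(χ_B)` are compact for every
bounded `B`. -/
def IsLocallyCompactOp (S : BornCoarse X) (φ : CtrlRep X H) (A : H →L[ℂ] H) : Prop :=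
  ∀ B ∈ S.bounded,
    IsCompactOperator ⇑(φ (chi B) ∘L A) ∧ IsCompactOperator ⇑(A ∘L φ (chi B))

/-- A controlled Hilbert space is locally finite if `H(B)` is finite-dimensional for every
bounded `B`. -/
def IsLocallyFiniteRep (S : BornCoarse X) (φ : CtrlRep X H) : Prop :=
  ∀ B ∈ S.bounded, FiniteDimensional ℂ ↥(LinearMap.range (φ (chi B) : H →ₗ[ℂ] H))

/-- A controlled Hilbert space is ample if there is an entourage `U` such that `H(U[x])` is
infinite-dimensional for every point `x`. -/
def IsAmple (S : BornCoarse X) (φ : CtrlRep X H) : Prop :=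
  ∃ U ∈ S.entourages, ∀ x : X,
    ¬FiniteDimensional ℂ ↥(LinearMap.range (φ (chi (thick U {x})) : H →ₗ[ℂ] H))

/-- A closed subspace `K ⊆ H` is a locally finite subspace if it carries an `X`-control
making it a locally finite `X`-controlled Hilbert space such that the inclusion `K → H`
has controlled propagation. -/
def IsLocFinSubspace (S : BornCoarse X) (φ : CtrlRep X H) (K : Submodule ℂ H) : Prop :=
  ∃ hK : IsClosed (K : Set H),
    haveI : CompleteSpace K := hK.completeSpace_coe
    ∃ ψ : CtrlRep X ↥K, IsControlledHilbert S ψ ∧ IsLocallyFiniteRep S ψ ∧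
      HasCtrlProp S ψ φ K.subtypeL

end

end

universe u

/-- A witness for the existence of an ample `X`-controlled Hilbert space. -/
structure AmpleHilbertWitness {X : Type u} [TopologicalSpace X] [DiscreteTopology X]
    (S : BornCoarse X) where
  /-- the underlying Hilbert space -/
  H : Type u
  [grp : NormedAddCommGroup H]
  [ips : InnerProductSpace ℂ H]
  [cs : CompleteSpace H]
  /-- the `X`-control -/
  rep : CtrlRep X H
  controlled : IsControlledHilbert S rep
  ample : IsAmple S rep


/-! If `(H, φ)` is ample via the entourage `U`, then for a `U⁻¹ ∘ U`-separated set `D` the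
subspaces `H(U[d])`, `d ∈ D`, are nonzero and mutually orthogonal. A unit vector in each of them
turns `D ∩ B` into an orthonormal family in the separable space `H(U[B])`, so `D ∩ B` is countable.

Conversely, a maximal `V`-separated set `D` (Zorn) meets `W[{x}]` for every `x`,
where `W = V ∪ V⁻¹ ∪ Δ`. Hence `ℓ²(D × ℕ)`, on which `C(X)` acts by multiplication through the
projection `D × ℕ → X`, is ample via `W`; it is controlled because `D` is locally countable. -/

open scoped InnerProductSpace lp
open TopologicalSpace BoundedContinuousFunction

section Chi

variable {X : Type*} [TopologicalSpace X] [DiscreteTopology X]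

lemma chi_apply (B : Set X) (x : X) : chi B x = B.indicator (fun _ => (1 : ℂ)) x := rfl

lemma chi_inter (A B : Set X) : chi (A ∩ B) = chi A * chi B := by
  ext x
  simp only [chi_apply, BoundedContinuousFunction.coe_mul, Pi.mul_apply]
  by_cases hA : x ∈ A <;> by_cases hB : x ∈ B <;> simp [hA, hB]

lemma star_chi (A : Set X) : star (chi A) = chi A := by
  ext x
  simp only [chi_apply, BoundedContinuousFunction.coe_star, Pi.star_apply]
  by_cases hA : x ∈ A <;> simp [hA]

lemma chi_empty : chi (∅ : Set X) = 0 := by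
  ext x
  simp [chi_apply]

end Chi

section Hsub

variable {X : Type*} [TopologicalSpace X] [DiscreteTopology X]
variable {H : Type*} [NormedAddCommGroup H] [InnerProductSpace ℂ H] [CompleteSpace H]

lemma hsub_mono (φ : CtrlRep X H) {A A' : Set X} (h : A ⊆ A') : Hsub φ A ⊆ Hsub φ A' := by
  rintro _ ⟨v, rfl⟩
  refine ⟨φ (chi A) v, ?_⟩
  rw [← mul_apply_eq_comp, ← map_mul, ← chi_inter, Set.inter_eq_right.mpr h]

lemma inner_eq_zero_of_mem_hsub (φ : CtrlRep X H) {A A' : Set X} (h : Disjoint A A') {v w : H}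
    (hv : v ∈ Hsub φ A) (hw : w ∈ Hsub φ A') : ⟪v, w⟫_ℂ = 0 := by
  obtain ⟨v, rfl⟩ := hv
  obtain ⟨w, rfl⟩ := hw
  have hsa : IsSelfAdjoint (φ (chi A)) := by rw [IsSelfAdjoint, ← map_star, star_chi]
  rw [← hsa.adjoint_eq, ContinuousLinearMap.adjoint_inner_left, ← mul_apply_eq_comp,
    ← map_mul, ← chi_inter, h.inter_eq, chi_empty, map_zero, zero_apply,
    inner_zero_right]

lemma exists_norm_eq_one_mem_hsub (φ : CtrlRep X H) {A : Set X}
    (hA : ¬FiniteDimensional ℂ (LinearMap.range (φ (chi A) : H →ₗ[ℂ] H))) :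
    ∃ w ∈ Hsub φ A, ‖w‖ = 1 := by
  have hne : LinearMap.range (φ (chi A) : H →ₗ[ℂ] H) ≠ ⊥ := fun h => hA (h ▸ inferInstance)
  obtain ⟨v, hv, hv0⟩ := Submodule.exists_mem_ne_zero_of_ne_bot hne
  exact ⟨(‖v‖⁻¹ : ℂ) • v, Submodule.smul_mem _ _ hv, norm_smul_inv_norm hv0⟩

end Hsub

lemma TopologicalSpace.IsSeparable.countable_of_le_dist {E ι : Type*} [PseudoMetricSpace E]
    {s : Set E} (hs : IsSeparable s) {ε : ℝ} (hε : 0 < ε) {v : ι → E} (hvs : ∀ i, v i ∈ s)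
    (hv : Pairwise fun i j => ε ≤ dist (v i) (v j)) : Countable ι := by
  obtain ⟨c, hc, hsc⟩ := hs
  choose y hyc hy using fun i => Metric.mem_closure_iff.mp (hsc (hvs i)) (ε / 2) (by positivity)
  have : Countable c := hc.to_subtype
  refine Function.Injective.countable (f := fun i => (⟨y i, hyc i⟩ : c)) fun i j hij => ?_
  by_contra hne
  have hyij : y i = y j := congrArg Subtype.val hij
  have := dist_triangle_right (v i) (v j) (y j)
  linarith [hv hne, hyij ▸ hy i, hy j]

lemma Orthonormal.countable_of_isSeparable {𝕜 E ι : Type*} [RCLike 𝕜] [NormedAddCommGroup E]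
    [InnerProductSpace 𝕜 E] {v : ι → E} (hv : Orthonormal 𝕜 v) {s : Set E} (hs : IsSeparable s)
    (hvs : ∀ i, v i ∈ s) : Countable ι := by
  refine hs.countable_of_le_dist one_pos hvs fun i j hij => ?_
  have hsq : dist (v i) (v j) ^ 2 = 2 := by
    rw [dist_eq_norm, @norm_sub_sq 𝕜, hv.norm_eq_one, hv.norm_eq_one, hv.inner_eq_zero hij]
    norm_num
  nlinarith [dist_nonneg (x := v i) (y := v j)]

section Coarse

variable {X : Type*}

lemma SetRel.isSeparated_iff_forall (V : Set (X × X)) (D : Set X) :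
    SetRel.IsSeparated V D ↔ ∀ d ∈ D, ∀ d' ∈ D, d ≠ d' → (d', d) ∉ V :=
  ⟨fun h _ hd _ hd' hne => h hd' hd hne.symm, fun h _ hx _ hy hne => h _ hy _ hx hne.symm⟩

lemma thick_mono {U : Set (X × X)} {B B' : Set X} (h : B ⊆ B') : thick U B ⊆ thick U B' :=
  fun _ ⟨b, hb, hxb⟩ => ⟨b, h hb, hxb⟩

lemma disjoint_thick_singleton {U : Set (X × X)} {x y : X}
    (h : (x, y) ∉ relComp {p | (p.2, p.1) ∈ U} U) : Disjoint (thick U {x}) (thick U {y}) := by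
  rw [Set.disjoint_left]
  rintro z ⟨_, rfl, hzx⟩ ⟨_, rfl, hzy⟩
  exact h ⟨z, hzx, hzy⟩

lemma SetRel.exists_maximal_isSeparated (V : Set (X × X)) : ∃ D, Maximal (SetRel.IsSeparated V) D :=
  zorn_subset _ fun c hc hchain =>
    ⟨⋃₀ c, hchain.pairwise_sUnion.mpr hc, fun _ => Set.subset_sUnion_of_mem⟩

lemma Maximal.exists_mem_rel_of_isSeparated {V : Set (X × X)} {D : Set X}
    (hD : Maximal (SetRel.IsSeparated V) D) (x : X) :
    ∃ d ∈ D, (d, x) ∈ V ∪ ({p | (p.2, p.1) ∈ V} ∪ {p | p.1 = p.2}) := by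
  by_cases hx : x ∈ D
  · exact ⟨x, hx, .inr (.inr rfl)⟩
  by_contra h
  exact hx (hD.mem_of_prop_insert (hD.prop.insert'
    (fun d hd hxd => (h ⟨d, hd, .inr (.inl hxd)⟩).elim) fun d hd hdx => (h ⟨d, hd, .inl hdx⟩).elim))

end Coarse

def BornCoarse.IsLocallyCountable {X : Type*} (S : BornCoarse X) (D : Set X) : Prop :=
  ∀ B ∈ S.bounded, (D ∩ B).Countable

section Ample

variable {X : Type*} [TopologicalSpace X] [DiscreteTopology X]
variable {H : Type*} [NormedAddCommGroup H] [InnerProductSpace ℂ H] [CompleteSpace H]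

theorem BornCoarse.isLocallyCountable_of_isSeparated {S : BornCoarse X} {φ : CtrlRep X H}
    (hφ : IsControlledHilbert S φ) {U : Set (X × X)} (hU : U ∈ S.entourages)
    (hinf : ∀ x, ¬FiniteDimensional ℂ (LinearMap.range (φ (chi (thick U {x})) : H →ₗ[ℂ] H)))
    {D : Set X} (hD : SetRel.IsSeparated (relComp {p | (p.2, p.1) ∈ U} U) D) :
    S.IsLocallyCountable D := by
  intro B hB
  choose w hw hw1 using fun x => exists_norm_eq_one_mem_hsub φ (hinf x)
  have hortho : Orthonormal ℂ fun d : ↥(D ∩ B) => w d :=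
    ⟨fun d => hw1 d, fun d d' hne => inner_eq_zero_of_mem_hsub φ
      (disjoint_thick_singleton (hD d.2.1 d'.2.1 (Subtype.coe_ne_coe.mpr hne))) (hw d) (hw d')⟩
  have : Countable ↥(D ∩ B) := hortho.countable_of_isSeparable (hφ _ (S.compat hU hB))
    fun d => hsub_mono φ (thick_mono (Set.singleton_subset_iff.mpr d.2.2)) (hw d)
  exact Set.countable_coe_iff.mp this

theorem BornCoarse.exists_isSeparated_isLocallyCountable_of_isAmple {S : BornCoarse X}
    {φ : CtrlRep X H} (hφ : IsControlledHilbert S φ) (hample : IsAmple S φ) :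
    ∃ V ∈ S.entourages, ∀ D, SetRel.IsSeparated V D → S.IsLocallyCountable D := by
  obtain ⟨U, hU, hinf⟩ := hample
  exact ⟨_, S.comp_mem (S.inv_mem hU) hU,
    fun _ hD => isLocallyCountable_of_isSeparated hφ hU hinf hD⟩

end Ample

section Singles

variable {ι : Type*}

lemma lp.orthonormal_single [DecidableEq ι] :
    Orthonormal ℂ fun i : ι => lp.single 2 i (1 : ℂ) := by
  convert (default : HilbertBasis ι ℂ ℓ²(ι, ℂ)).orthonormal using 1
  funext i
  rw [← HilbertBasis.repr_symm_single]
  rfl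

lemma isSeparable_setOf_forall_notMem_eq_zero {c : Set ι} (hc : c.Countable) :
    IsSeparable {v : ℓ²(ι, ℂ) | ∀ i ∉ c, v i = 0} := by
  classical
  refine (((hc.image fun i => lp.single 2 i (1 : ℂ)).isSeparable.span (R := ℂ)).closure).mono ?_
  intro v hv
  refine mem_closure_of_tendsto (lp.hasSum_single ENNReal.ofNat_ne_top v)
    (Filter.Eventually.of_forall fun s => Submodule.sum_mem _ fun i _ => ?_)
  by_cases hi : i ∈ c
  · rw [← mul_one (v i), ← smul_eq_mul, lp.single_smul]
    exact Submodule.smul_mem _ _ (Submodule.subset_span ⟨i, hi, rfl⟩)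
  · rw [hv i hi, lp.single_zero]
    exact Submodule.zero_mem _

end Singles

section MulRep

variable {ι X : Type*} [TopologicalSpace X] (π : ι → X)

lemma memℓp_comp_mul (f : X →ᵇ ℂ) (v : ℓ²(ι, ℂ)) :
    Memℓp (fun i => f (π i) * v i) 2 :=
  ((lp.memℓp v).norm.const_mul ‖f‖).mono fun i => by
    rw [norm_mul]
    exact mul_le_mul_of_nonneg_right (f.norm_coe_le_norm _) (norm_nonneg _)

noncomputable def mulLp (f : X →ᵇ ℂ) : ℓ²(ι, ℂ) →L[ℂ] ℓ²(ι, ℂ) :=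
  LinearMap.mkContinuous
    { toFun := fun v => ⟨_, memℓp_comp_mul π f v⟩
      map_add' := fun v w => by ext i; exact mul_add _ _ _
      map_smul' := fun c v => by ext i; exact mul_left_comm _ _ _ }
    ‖f‖ fun v => calc
      _ ≤ ‖(‖f‖ : ℂ) • v‖ := lp.norm_mono two_ne_zero fun i => by
        simp only [LinearMap.coe_mk, AddHom.coe_mk, lp.coeFn_smul, Pi.smul_apply, smul_eq_mul,
          norm_mul, Complex.norm_real, norm_norm]
        exact mul_le_mul_of_nonneg_right (f.norm_coe_le_norm _) (norm_nonneg _)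
      _ = ‖f‖ * ‖v‖ := by rw [norm_smul, Complex.norm_real, norm_norm]

@[simp]
lemma mulLp_apply (f : X →ᵇ ℂ) (v : ℓ²(ι, ℂ)) (i : ι) :
    mulLp π f v i = f (π i) * v i := rfl

noncomputable def mulRep : (X →ᵇ ℂ) →⋆ₐ[ℂ] (ℓ²(ι, ℂ) →L[ℂ] ℓ²(ι, ℂ)) where
  toFun := mulLp π
  map_one' := by ext v i; simp
  map_mul' f g := by ext v i; simp [mul_assoc]
  map_zero' := by ext v i; simp
  map_add' f g := by ext v i; simp [add_mul]
  commutes' c := by ext v i; simp [Algebra.algebraMap_eq_smul_one]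
  map_star' f := by
    rw [ContinuousLinearMap.star_eq_adjoint, ContinuousLinearMap.eq_adjoint_iff]
    intro v w
    simp only [lp.inner_eq_tsum]
    refine tsum_congr fun i => ?_
    simp only [mulLp_apply, RCLike.inner_apply, BoundedContinuousFunction.coe_star, Pi.star_apply,
      map_mul, RCLike.star_def, RCLike.conj_conj]
    ring

end MulRep

section MulRepChi

variable {ι X : Type*} [TopologicalSpace X] [DiscreteTopology X] (π : ι → X)

lemma mulRep_chi_apply (B : Set X) (v : ℓ²(ι, ℂ)) (i : ι) :
    mulRep π (chi B) v i = (π ⁻¹' B).indicator v i := by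
  by_cases hi : π i ∈ B <;> simp [mulRep, chi_apply, hi]

lemma hsub_mulRep_subset (B : Set X) :
    Hsub (mulRep π) B ⊆ {v | ∀ i ∉ π ⁻¹' B, v i = 0} := by
  rintro _ ⟨v, rfl⟩ i hi
  rw [mulRep_chi_apply, Set.indicator_of_notMem hi]

lemma single_mem_hsub_mulRep [DecidableEq ι] {B : Set X} {i : ι} (hi : π i ∈ B) (a : ℂ) :
    lp.single 2 i a ∈ Hsub (mulRep π) B := by
  refine ⟨lp.single 2 i a, lp.ext (funext fun j => ?_)⟩
  rw [mulRep_chi_apply]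
  by_cases hj : j = i
  · subst hj
    exact Set.indicator_of_mem (show j ∈ π ⁻¹' B from hi) _
  · exact Set.indicator_apply_eq_self.mpr fun _ =>
      lp.single_apply_ne (E := fun _ : ι => ℂ) 2 i a hj

lemma isControlledHilbert_mulRep (S : BornCoarse X)
    (hπ : ∀ B ∈ S.bounded, (π ⁻¹' B).Countable) : IsControlledHilbert S (mulRep π) :=
  fun B hB => (isSeparable_setOf_forall_notMem_eq_zero (hπ B hB)).mono (hsub_mulRep_subset π B)

lemma not_finiteDimensional_range_mulRep_chi {B : Set X} {e : ℕ → ι} (he : e.Injective)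
    (heB : ∀ n, π (e n) ∈ B) :
    ¬FiniteDimensional ℂ (LinearMap.range (mulRep π (chi B) : ℓ²(ι, ℂ) →ₗ[ℂ] ℓ²(ι, ℂ))) := by
  classical
  intro hfin
  have hli : LinearIndependent ℂ fun n =>
      (⟨lp.single 2 (e n) 1, single_mem_hsub_mulRep π (heB n) 1⟩ :
        LinearMap.range (mulRep π (chi B) : ℓ²(ι, ℂ) →ₗ[ℂ] ℓ²(ι, ℂ))) :=
    .of_comp (Submodule.subtype _) ((lp.orthonormal_single.comp e he).linearIndependent)
  have := hli.finite
  exact not_finite ℕ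

end MulRepChi

section PointsTimesNat

variable {X : Type*} [TopologicalSpace X] [DiscreteTopology X] {S : BornCoarse X}

lemma isControlledHilbert_mulRep_of_isLocallyCountable {D : Set X} (hD : S.IsLocallyCountable D) :
    IsControlledHilbert S (mulRep fun i : D × ℕ => (i.1 : X)) := by
  refine isControlledHilbert_mulRep _ S fun B hB => ?_
  refine (((hD B hB).preimage Subtype.val_injective).prod Set.countable_univ).mono ?_
  exact fun i (hi : (i.1 : X) ∈ B) => ⟨⟨i.1.2, hi⟩, trivial⟩

lemma isAmple_mulRep_of_forall_exists_mem {D : Set X} {W : Set (X × X)} (hW : W ∈ S.entourages)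
    (hDW : ∀ x, ∃ d ∈ D, (d, x) ∈ W) : IsAmple S (mulRep fun i : D × ℕ => (i.1 : X)) := by
  refine ⟨W, hW, fun x => ?_⟩
  obtain ⟨d, hd, hdx⟩ := hDW x
  exact not_finiteDimensional_range_mulRep_chi _ (e := fun n => (⟨d, hd⟩, n))
    (fun _ _ h => (Prod.ext_iff.mp h).2) fun _ => ⟨x, rfl, hdx⟩

end PointsTimesNat

theorem BornCoarse.nonempty_ampleHilbertWitness {X : Type u} [TopologicalSpace X]
    [DiscreteTopology X] {S : BornCoarse X} {V : Set (X × X)} (hV : V ∈ S.entourages)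
    (hloc : ∀ D, SetRel.IsSeparated V D → S.IsLocallyCountable D) :
    Nonempty (AmpleHilbertWitness S) := by
  obtain ⟨D, hD⟩ := SetRel.exists_maximal_isSeparated V
  exact ⟨⟨ℓ²(D × ℕ, ℂ), mulRep _,
    isControlledHilbert_mulRep_of_isLocallyCountable (hloc D hD.prop),
    isAmple_mulRep_of_forall_exists_mem (S.union_mem hV (S.union_mem (S.inv_mem hV) S.diag_mem))
      hD.exists_mem_rel_of_isSeparated⟩⟩

/-- A bornological coarse space admits an ample `X`-controlled Hilbert space if and only if
it is locally countable, i.e. there is an entourage `V` such that every `V`-separated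
subset of `X` is locally countable. -/
theorem exists_ample_iff_locallyCountable {X : Type u} [TopologicalSpace X]
    [DiscreteTopology X] (S : BornCoarse X) :
    Nonempty (AmpleHilbertWitness S) ↔
      ∃ V ∈ S.entourages, ∀ D : Set X,
        (∀ d ∈ D, ∀ d' ∈ D, d ≠ d' → (d', d) ∉ V) →
          ∀ B ∈ S.bounded, (D ∩ B).Countable := by
  simp only [← SetRel.isSeparated_iff_forall]
  constructor
  · rintro ⟨⟨H, φ, hφ, hample⟩⟩
    exact S.exists_isSeparated_isLocallyCountable_of_isAmple hφ hample
  · rintro ⟨V, hV, hloc⟩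
    exact S.nonempty_ampleHilbertWitness hV hloc
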